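/- Let H(u) = (1/2) Σ_{j=1}^{n} [ V(|u_j|²) + ω|u_j|² − |u_{j+1} − u_j|² ] on (ℝ²)^n with periodic indices, ω = 4 sin²(mζ/2) − V'(a²), and a_m = (a e^{jmζJ} e₁)_{j=1}^n. Then for each k, the Hessian satisfies D²H(a_m) T_k z = T_k B_k z where B_k = diag(2a²V''(a²) − α_k, −α_k) + iJ β_k, with α_k = 4 cos(mζ) sin²(kζ/2), β_k = 2 sin(mζ) sin(kζ). -/

import Mathlib

open Matrix Complex

noncomputable section

/-- The 2×2 symplectic matrix `J` (as a complex matrix). -/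
def Jmat : Matrix (Fin 2) (Fin 2) ℂ := !![0, -1; 1, 0]

/-- `e₁ e₁ᵀ = diag(1,0)`. -/
def E11 : Matrix (Fin 2) (Fin 2) ℂ := !![1, 0; 0, 0]

/-- `T_k z` : the vector with `j`-th component `n^{-1/2} e^{j(ikI+mJ)ζ} z`. -/
def Tk (n : ℕ) (m k : ℤ) (ζ : ℝ) (z : Fin 2 → ℂ) : ℤ → (Fin 2 → ℂ) := fun j =>
  ((Real.sqrt n)⁻¹ : ℂ) •
    (NormedSpace.exp (((j : ℂ) * (ζ : ℂ)) •
      (((k : ℂ) * Complex.I) • (1 : Matrix (Fin 2) (Fin 2) ℂ) + (m : ℂ) • Jmat))).mulVec z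

/-!
At site `j`, `T_k z` is `n^{-1/2} e^{ijkζ} R(jmζ) z` with `R(θ) = exp(θJ) = cos θ + sin θ J`
(because `J² = -1`). Conjugating `A_j` by `R(jmζ)` removes its dependence on `j`, and a shift of
the site by `±1` multiplies by `e^{±ikζ} R(±mζ)`. Hence `D²H(a_m) T_k z = T_k M z` for the constant
matrix `M = -2cos(mζ) + 2a²V''(a²) e₁e₁ᵀ + e^{ikζ} R(mζ) + e^{-ikζ} R(-mζ)`, and `M = B_k` because
`e^{iκ} R(θ) + e^{-iκ} R(-θ) = 2cos κ cos θ + 2i sin κ sin θ J` and `1 - cos κ = 2 sin²(κ/2)`.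
-/

open NormedSpace

theorem exp_smul_of_mul_self_eq_neg_one {A : Type*} [Ring A] [Algebra ℂ A] [TopologicalSpace A]
    [IsTopologicalRing A] [ContinuousSMul ℂ A] [T2Space A] {J : A} (hJ : J * J = -1) (θ : ℂ) :
    exp (θ • J) = Complex.cos θ • (1 : A) + Complex.sin θ • J := by
  have hJ_pow (n : ℕ) : J ^ (2 * n) = ((-1 : ℂ) ^ n) • (1 : A) := by
    rw [pow_mul, sq, hJ, ← neg_one_smul ℂ (1 : A), smul_pow, one_pow]
  rw [exp_eq_tsum ℂ]
  refine HasSum.tsum_eq (HasSum.even_add_odd ?_ ?_)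
  · convert (Complex.hasSum_cos θ).smul_const (1 : A) using 2 with n
    rw [smul_pow, hJ_pow, smul_smul, smul_smul]
    congr 1
    field_simp
  · convert (Complex.hasSum_sin θ).smul_const J using 2 with n
    rw [smul_pow, pow_succ J, hJ_pow, smul_mul_assoc, one_mul, smul_smul, smul_smul]
    congr 1
    field_simp

theorem Jmat_mul_self : Jmat * Jmat = -1 := by
  ext i j; fin_cases i <;> fin_cases j <;> simp [Jmat]

theorem exp_smul_Jmat (θ : ℂ) : exp (θ • Jmat) = Complex.cos θ • 1 + Complex.sin θ • Jmat :=
  exp_smul_of_mul_self_eq_neg_one Jmat_mul_self θ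

theorem exp_add_smul_Jmat (x y : ℂ) :
    exp ((x + y) • Jmat) = exp (x • Jmat) * exp (y • Jmat) := by
  rw [add_smul, Matrix.exp_add_of_commute]
  exact ((Commute.refl Jmat).smul_left x).smul_right y

theorem exp_neg_smul_Jmat_mul (x : ℂ) : exp ((-x) • Jmat) * exp (x • Jmat) = 1 := by
  rw [← exp_add_smul_Jmat, neg_add_cancel, zero_smul, NormedSpace.exp_zero]

theorem exp_smul_Jmat_mul_neg (x : ℂ) : exp (x • Jmat) * exp ((-x) • Jmat) = 1 := by
  simpa using exp_neg_smul_Jmat_mul (-x)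

theorem Matrix.exp_algebraMap_complex {ι : Type*} [Fintype ι] [DecidableEq ι] (x : ℂ) :
    exp (algebraMap ℂ (Matrix ι ι ℂ) x) = algebraMap ℂ _ (Complex.exp x) := by
  rw [algebraMap_eq_diagonal, algebraMap_eq_diagonal, Matrix.exp_diagonal]
  congr 1
  ext i
  simp only [Pi.coe_exp, Pi.algebraMap_apply, Algebra.algebraMap_self, RingHom.id_apply,
    Complex.exp_eq_exp_ℂ]

theorem Tk_apply (n : ℕ) (m k : ℤ) (ζ : ℝ) (z : Fin 2 → ℂ) (j : ℤ) :
    Tk n m k ζ z j = (((Real.sqrt n)⁻¹ : ℂ) * Complex.exp (j * k * ζ * I)) •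
      (exp (((j : ℂ) * m * ζ) • Jmat) *ᵥ z) := by
  have hsplit : ((j : ℂ) * ζ) • (((k : ℂ) * I) • (1 : Matrix (Fin 2) (Fin 2) ℂ) + (m : ℂ) • Jmat)
      = algebraMap ℂ _ (j * k * ζ * I) + ((j : ℂ) * m * ζ) • Jmat := by
    rw [Algebra.algebraMap_eq_smul_one, smul_add, smul_smul, smul_smul]
    ring_nf
  have hcomm : Commute (algebraMap ℂ (Matrix (Fin 2) (Fin 2) ℂ) (j * k * ζ * I))
      (((j : ℂ) * m * ζ) • Jmat) := Algebra.commutes' _ _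
  rw [Tk, hsplit, Matrix.exp_add_of_commute _ _ hcomm, Matrix.exp_algebraMap_complex,
    Algebra.algebraMap_eq_smul_one, smul_mul_assoc, one_mul, smul_mulVec, smul_smul]

theorem Tk_add (n : ℕ) (m k : ℤ) (ζ : ℝ) (z w : Fin 2 → ℂ) :
    Tk n m k ζ (z + w) = Tk n m k ζ z + Tk n m k ζ w := by
  ext j : 1
  simp only [Tk, mulVec_add, smul_add, Pi.add_apply]

theorem Tk_apply_add (n : ℕ) (m k : ℤ) (ζ : ℝ) (z : Fin 2 → ℂ) (j l : ℤ) :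
    Tk n m k ζ z (j + l) =
      Tk n m k ζ ((Complex.exp (l * k * ζ * I) • exp (((l : ℂ) * m * ζ) • Jmat)) *ᵥ z) j := by
  have hphase : Complex.exp ((j + l : ℤ) * k * ζ * I)
      = Complex.exp (j * k * ζ * I) * Complex.exp (l * k * ζ * I) := by
    rw [← Complex.exp_add]; push_cast; ring_nf
  have hangle : ((j + l : ℤ) : ℂ) * m * ζ = j * m * ζ + l * m * ζ := by push_cast; ring
  rw [Tk_apply, Tk_apply, hphase, hangle, exp_add_smul_Jmat, smul_mulVec, mulVec_smul,
    mulVec_mulVec, smul_smul, ← mul_assoc]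

theorem mulVec_Tk_apply (n : ℕ) (m k : ℤ) (ζ : ℝ) (z : Fin 2 → ℂ) (j : ℤ)
    (M : Matrix (Fin 2) (Fin 2) ℂ) :
    M *ᵥ Tk n m k ζ z j = Tk n m k ζ
      ((exp ((-((j : ℂ) * m * ζ)) • Jmat) * M * exp (((j : ℂ) * m * ζ) • Jmat)) *ᵥ z) j := by
  rw [Tk_apply, Tk_apply, mulVec_smul, mulVec_mulVec, mulVec_mulVec, ← mul_assoc,
    ← mul_assoc, exp_smul_Jmat_mul_neg, one_mul]

theorem exp_smul_Jmat_conj_smul_one_add_smul (x s d : ℂ) (M : Matrix (Fin 2) (Fin 2) ℂ) :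
    exp ((-x) • Jmat) * (s • 1 + d • (exp (x • Jmat) * M * exp ((-x) • Jmat))) * exp (x • Jmat)
      = s • 1 + d • M := by
  have hcancel : exp ((-x) • Jmat) * (exp (x • Jmat) * M * exp ((-x) • Jmat)) * exp (x • Jmat)
      = M := by
    rw [← mul_assoc, ← mul_assoc, exp_neg_smul_Jmat_mul, one_mul, mul_assoc,
      exp_neg_smul_Jmat_mul, mul_one]
  rw [mul_add, add_mul, mul_smul_comm, smul_mul_assoc, mul_smul_comm, smul_mul_assoc, hcancel,
    mul_one, exp_neg_smul_Jmat_mul]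

theorem bloch_symbol_eq (θ κ d : ℂ) :
    (-2 * Complex.cos θ) • 1 + d • E11 + Complex.exp (κ * I) • exp (θ • Jmat)
      + Complex.exp (-κ * I) • exp ((-θ) • Jmat)
      = !![d - 4 * Complex.cos θ * Complex.sin (κ / 2) ^ 2, 0;
          0, -(4 * Complex.cos θ * Complex.sin (κ / 2) ^ 2)]
        + (2 * Complex.sin θ * Complex.sin κ) • (I • Jmat) := by
  have hsin : Complex.sin (κ / 2) ^ 2 = (1 - Complex.cos κ) / 2 := by
    rw [← mul_div_cancel₀ κ two_ne_zero, Complex.cos_two_mul, mul_div_cancel_left₀ _ two_ne_zero]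
    linear_combination Complex.sin_sq_add_cos_sq (κ / 2)
  rw [hsin, exp_smul_Jmat, exp_smul_Jmat, Complex.cos_neg, Complex.sin_neg, Complex.exp_mul_I,
    neg_mul, ← neg_mul, Complex.exp_mul_I, Complex.cos_neg, Complex.sin_neg]
  ext i j
  fin_cases i <;> fin_cases j <;> simp [Jmat, E11] <;> ring

theorem stmt5_general (n : ℕ) (m k : ℤ) (a : ℝ) (ζ : ℝ) (c : ℝ)
    (A : ℤ → Matrix (Fin 2) (Fin 2) ℂ)
    (hA : ∀ j : ℤ, A j = ((-2 * Real.cos (m * ζ) : ℝ) : ℂ) • (1 : Matrix (Fin 2) (Fin 2) ℂ)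
        + ((2 * a ^ 2 * c : ℝ) : ℂ) •
          (NormedSpace.exp (((j * m * ζ : ℝ) : ℂ) • Jmat) * E11 *
            NormedSpace.exp ((-(j * m * ζ : ℝ) : ℂ) • Jmat)))
    (D2H : (ℤ → (Fin 2 → ℂ)) → (ℤ → (Fin 2 → ℂ)))
    (hD2H : ∀ x j, D2H x j = (A j).mulVec (x j) + x (j + 1) + x (j - 1))
    (αk βk : ℝ)
    (hα : αk = 4 * Real.cos (m * ζ) * (Real.sin (k * ζ / 2)) ^ 2)
    (hβ : βk = 2 * Real.sin (m * ζ) * Real.sin (k * ζ))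
    (Bk : Matrix (Fin 2) (Fin 2) ℂ)
    (hB : Bk = !![((2 * a ^ 2 * c - αk : ℝ) : ℂ), 0; 0, ((-αk : ℝ) : ℂ)]
        + (βk : ℂ) • (Complex.I • Jmat)) :
    ∀ z : Fin 2 → ℂ, D2H (Tk n m k ζ z) = Tk n m k ζ (Bk.mulVec z) := by
  intro z
  funext j
  have hconj : exp ((-((j : ℂ) * m * ζ)) • Jmat) * A j * exp (((j : ℂ) * m * ζ) • Jmat)
      = ((-2 * Real.cos (m * ζ) : ℝ) : ℂ) • 1 + ((2 * a ^ 2 * c : ℝ) : ℂ) • E11 := by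
    rw [hA]; push_cast; exact exp_smul_Jmat_conj_smul_one_add_smul _ _ _ _
  rw [hD2H, mulVec_Tk_apply, hconj, Tk_apply_add, sub_eq_add_neg, Tk_apply_add, ← Pi.add_apply,
    ← Tk_add, ← Pi.add_apply, ← Tk_add, ← add_mulVec, ← add_mulVec]
  congr 2
  rw [hB, hα, hβ]
  push_cast
  convert bloch_symbol_eq ((m : ℂ) * ζ) ((k : ℂ) * ζ) (2 * a ^ 2 * c) using 3 <;> ring_nf

/-- the Hessian `D²H(a_m)` of
`H(u) = (1/2)Σ_j [V(|u_j|²) + ω|u_j|² − |u_{j+1}−u_j|²]` at the relative equilibrium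
`a_m` is the block-circulant operator
`(D²H(a_m) x)_j = A_j x_j + x_{j+1} + x_{j−1}` with diagonal blocks
`A_j = −2cos(mζ) I + 2a²V''(a²) e^{jmζJ} e₁e₁ᵀ e^{−jmζJ}`, and it satisfies
`D²H(a_m) T_k z = T_k B_k z`, where
`B_k = diag(2a²V''(a²) − α_k, −α_k) + iJ β_k`, `α_k = 4cos(mζ)sin²(kζ/2)`,
`β_k = 2 sin(mζ) sin(kζ)`. -/
theorem stmt5 (n : ℕ) (hn : 1 ≤ n) (m k : ℤ) (a : ℝ) (ha : 0 < a) (V : ℝ → ℝ)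
    (ζ : ℝ) (hζ : ζ = 2 * Real.pi / n)
    (c : ℝ) (hc : c = deriv (deriv V) (a ^ 2))
    (A : ℤ → Matrix (Fin 2) (Fin 2) ℂ)
    (hA : ∀ j : ℤ, A j = ((-2 * Real.cos (m * ζ) : ℝ) : ℂ) • (1 : Matrix (Fin 2) (Fin 2) ℂ)
        + ((2 * a ^ 2 * c : ℝ) : ℂ) •
          (NormedSpace.exp (((j * m * ζ : ℝ) : ℂ) • Jmat) * E11 *
            NormedSpace.exp ((-(j * m * ζ : ℝ) : ℂ) • Jmat)))
    (D2H : (ℤ → (Fin 2 → ℂ)) → (ℤ → (Fin 2 → ℂ)))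
    (hD2H : ∀ x j, D2H x j = (A j).mulVec (x j) + x (j + 1) + x (j - 1))
    (αk βk : ℝ)
    (hα : αk = 4 * Real.cos (m * ζ) * (Real.sin (k * ζ / 2)) ^ 2)
    (hβ : βk = 2 * Real.sin (m * ζ) * Real.sin (k * ζ))
    (Bk : Matrix (Fin 2) (Fin 2) ℂ)
    (hB : Bk = !![((2 * a ^ 2 * c - αk : ℝ) : ℂ), 0; 0, ((-αk : ℝ) : ℂ)]
        + (βk : ℂ) • (Complex.I • Jmat)) :
    ∀ z : Fin 2 → ℂ, D2H (Tk n m k ζ z) = Tk n m k ζ (Bk.mulVec z) :=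
  stmt5_general n m k a ζ c A hA D2H hD2H αk βk hα hβ Bk hB

end
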